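/- arXiv:2605.21732 — 2 statements merged into one kernel-verified Lean document; each statement's English description precedes it below -/
import Mathlib

section
/- Let X be a normed linear space and K ⊆ X a cone (a closed convex set with λu ∈ K for all u ∈ K, λ ≥ 0, and K ∩ (−K) = {0}). Then K is a retract of X, i.e., there exists a continuous map ρ : X → K with ρ(u) = u for all u ∈ K. -/
/-!
Dugundji's construction: a partition of unity on the open set `Kᶜ` glues constant local choices
into a continuous map `g : Kᶜ → K` with `dist (g y) y < 2 * infDist y K`, and the last bound
makes `g` extended by the identity on `K` continuous at the points of `K`.
-/

open Set Metric Filter Topology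

theorem IsClosed.exists_continuous_mem_of_dist_lt_two_mul_infDist {E : Type*}
    [NormedAddCommGroup E] [NormedSpace ℝ E] {K : Set E} (hK : IsClosed K) (hconv : Convex ℝ K)
    (hne : K.Nonempty) :
    ∃ g : C((Kᶜ : Set E), E), ∀ y, g y ∈ K ∧ dist (g y) y < 2 * infDist (y : E) K := by
  simp only [← mem_ball, ← mem_inter_iff]
  refine exists_continuous_forall_mem_convex_of_local_const
    (t := fun y : (Kᶜ : Set E) => K ∩ ball (y : E) (2 * infDist (y : E) K))
    (fun y => hconv.inter (convex_ball _ _)) fun x => ?_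
  have hpos : 0 < infDist (x : E) K := (hK.notMem_iff_infDist_pos hne).1 x.2
  obtain ⟨c, hcK, hc⟩ := (infDist_lt_iff hne).1 (lt_two_mul_self hpos)
  have hcont : Continuous fun y : (Kᶜ : Set E) => 2 * infDist (y : E) K :=
    continuous_const.mul ((continuous_infDist_pt K).comp continuous_subtype_val)
  have hnear : ∀ᶠ y : (Kᶜ : Set E) in 𝓝 x, dist c (y : E) < 2 * infDist (y : E) K :=
    (continuous_const.dist continuous_subtype_val).continuousAt.eventually_lt
      hcont.continuousAt (by rwa [dist_comm])
  exact ⟨c, hnear.mono fun y hy => ⟨hcK, hy⟩⟩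

theorem IsClosed.continuous_dite_of_dist_le_mul_infDist {X : Type*} [PseudoMetricSpace X]
    {K : Set X} [DecidablePred (· ∈ K)] (hK : IsClosed K) {g : (Kᶜ : Set X) → X}
    (hg : Continuous g) {C : ℝ} (hdist : ∀ y, dist (g y) y ≤ C * infDist (y : X) K) :
    Continuous fun x => if h : x ∈ K then x else g ⟨x, h⟩ := by
  rw [continuous_iff_continuousAt]
  intro x
  by_cases hx : x ∈ K
  · rw [ContinuousAt, dif_pos hx, tendsto_iff_dist_tendsto_zero]
    have hbound : ∀ y, dist (if h : y ∈ K then y else g ⟨y, h⟩) x ≤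
        C * infDist y K + dist y x := by
      intro y
      split_ifs with hy
      · rw [infDist_zero_of_mem hy, mul_zero, zero_add]
      · exact (dist_triangle _ y x).trans (by gcongr; exact hdist ⟨y, hy⟩)
    have hlim : Tendsto (fun y => C * infDist y K + dist y x) (𝓝 x) (𝓝 0) := by
      have hcont : Continuous fun y => C * infDist y K + dist y x :=
        (continuous_const.mul (continuous_infDist_pt K)).add (continuous_id.dist continuous_const)
      simpa [infDist_zero_of_mem hx] using hcont.tendsto x
    exact squeeze_zero (fun _ => dist_nonneg) hbound hlim
  · refine ContinuousOn.continuousAt ?_ (hK.isOpen_compl.mem_nhds hx)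
    rw [continuousOn_iff_continuous_domRestrict]
    convert hg using 1
    funext y
    simp [dif_neg y.2]

theorem IsClosed.exists_retraction_of_convex {E : Type*} [NormedAddCommGroup E] [NormedSpace ℝ E]
    {K : Set E} (hK : IsClosed K) (hconv : Convex ℝ K) (hne : K.Nonempty) :
    ∃ ρ : E → E, Continuous ρ ∧ (∀ x, ρ x ∈ K) ∧ ∀ u ∈ K, ρ u = u := by
  classical
  obtain ⟨g, hg⟩ := hK.exists_continuous_mem_of_dist_lt_two_mul_infDist hconv hne
  refine ⟨fun x => if h : x ∈ K then x else g ⟨x, h⟩,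
    hK.continuous_dite_of_dist_le_mul_infDist g.continuous fun y => (hg y).2.le,
    fun x => ?_, fun u hu => dif_pos hu⟩
  dsimp only
  split_ifs with hx
  exacts [hx, (hg _).1]

theorem cone_is_retract_general
    {X : Type*} [NormedAddCommGroup X] [NormedSpace ℝ X]
    (K : Set X)
    (hclosed : IsClosed K)
    (hconvex : Convex ℝ K)
    (hpointed : K ∩ (-K) = {0}) :
    ∃ ρ : X → X, Continuous ρ ∧ (∀ x, ρ x ∈ K) ∧ (∀ u ∈ K, ρ u = u) := by
  have hzero : (0 : X) ∈ K := (hpointed.ge rfl).1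
  exact hclosed.exists_retraction_of_convex hconvex ⟨0, hzero⟩

/-- A cone (closed convex set, closed under nonnegative scaling, with
`K ∩ (-K) = {0}`) in a normed linear space is a retract of the space. -/
theorem cone_is_retract
    {X : Type*} [NormedAddCommGroup X] [NormedSpace ℝ X]
    (K : Set X)
    (hclosed : IsClosed K)
    (hconvex : Convex ℝ K)
    (hscale : ∀ u ∈ K, ∀ (l : ℝ), 0 ≤ l → l • u ∈ K)
    (hpointed : K ∩ (-K) = {0}) :
    ∃ ρ : X → X, Continuous ρ ∧ (∀ x, ρ x ∈ K) ∧ (∀ u ∈ K, ρ u = u) :=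
  cone_is_retract_general K hclosed hconvex hpointed
end

section
/- Define h : [4,∞) → ℝ by h(z) = (s(z)/s̃(z))·e^{√(z(z−4))} − 4/3, where s(z) = ((z−2) − √(z(z−4)))/2 and s̃(z) = ((z−2) + √(z(z−4)))/2. Then h is monotone increasing on [4,∞), h(4) = 1 − 4/3 < 0, and h(z) > 0 for all z ≥ 5; in particular h has a unique zero z₀ ∈ (4,5). -/
/-!
The two numbers `s(z) ≤ s̃(z)` are the roots of `X² - (z - 2) X + 1`, so `s = s̃⁻¹` and
`s̃ - s = √(z(z - 4))`. Hence `h(z) = F(s̃(z)) - 4/3` with `F(u) = e^{u - u⁻¹} / u²`, and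
`F'(u) = e^{u - u⁻¹} (u - 1)² / u⁴ > 0` for `u > 1`, while `s̃` increases from `s̃(4) = 1`.
At `z = 5` we have `s̃ = (3 + √5)/2`, and `h(5) > 0` becomes `e^{√5} > (14 + 6√5)/3`, which
the Taylor polynomial of degree 6 already gives once the powers of `√5` are reduced.
-/

open Set Real

noncomputable def smallRoot (z : ℝ) : ℝ := ((z - 2) - √(z * (z - 4))) / 2

noncomputable def largeRoot (z : ℝ) : ℝ := ((z - 2) + √(z * (z - 4))) / 2

noncomputable def expSubInvDivSq (u : ℝ) : ℝ := exp (u - u⁻¹) / u ^ 2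

lemma hasDerivAt_expSubInvDivSq {u : ℝ} (hu : u ≠ 0) :
    HasDerivAt expSubInvDivSq (exp (u - u⁻¹) * (u - 1) ^ 2 / u ^ 4) u := by
  have h : HasDerivAt (fun u => u - u⁻¹) (1 + (u ^ 2)⁻¹) u :=
    ((hasDerivAt_id' u).sub (hasDerivAt_inv hu)).congr_deriv (by ring)
  refine (h.exp.div (hasDerivAt_pow 2 u) (pow_ne_zero 2 hu)).congr_deriv ?_
  field_simp
  ring

lemma continuousOn_expSubInvDivSq : ContinuousOn expSubInvDivSq (Ici 1) := fun _ hu =>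
  (hasDerivAt_expSubInvDivSq (by grind)).continuousAt.continuousWithinAt

lemma strictMonoOn_expSubInvDivSq : StrictMonoOn expSubInvDivSq (Ici 1) := by
  refine strictMonoOn_of_deriv_pos (convex_Ici 1) continuousOn_expSubInvDivSq fun u hu => ?_
  rw [interior_Ici, mem_Ioi] at hu
  rw [(hasDerivAt_expSubInvDivSq (by positivity)).deriv]
  have : 0 < u - 1 := sub_pos.2 hu
  positivity

lemma smallRoot_mul_largeRoot {z : ℝ} (hz : 4 ≤ z) : smallRoot z * largeRoot z = 1 := by
  unfold smallRoot largeRoot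
  linear_combination -Real.sq_sqrt (show 0 ≤ z * (z - 4) by nlinarith) / 4

lemma one_le_largeRoot {z : ℝ} (hz : 4 ≤ z) : 1 ≤ largeRoot z := by
  unfold largeRoot
  linarith [sqrt_nonneg (z * (z - 4))]

lemma continuous_largeRoot : Continuous largeRoot := by
  unfold largeRoot
  fun_prop

lemma strictMonoOn_largeRoot : StrictMonoOn largeRoot (Ici 4) := by
  intro a ha b hb hab
  have : √(a * (a - 4)) ≤ √(b * (b - 4)) := Real.sqrt_le_sqrt (by nlinarith [mem_Ici.1 ha])
  unfold largeRoot
  linarith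

lemma largeRoot_sub_inv {z : ℝ} (hz : 4 ≤ z) :
    largeRoot z - (largeRoot z)⁻¹ = √(z * (z - 4)) := by
  rw [← eq_inv_of_mul_eq_one_left (smallRoot_mul_largeRoot hz), smallRoot, largeRoot]
  ring

lemma smallRoot_div_largeRoot_mul_exp {z : ℝ} (hz : 4 ≤ z) :
    smallRoot z / largeRoot z * exp √(z * (z - 4)) = expSubInvDivSq (largeRoot z) := by
  rw [← largeRoot_sub_inv hz, eq_inv_of_mul_eq_one_left (smallRoot_mul_largeRoot hz),
    expSubInvDivSq]
  field_simp

lemma fourteen_add_six_mul_sqrt_five_div_three_lt_exp : (14 + 6 * √5) / 3 < exp √5 := by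
  have h2 : √5 ^ 2 = 5 := Real.sq_sqrt (by norm_num)
  have h3 : √5 ^ 3 = 5 * √5 := by linear_combination √5 * h2
  have h4 : √5 ^ 4 = 25 := by linear_combination (√5 ^ 2 + 5) * h2
  have h5 : √5 ^ 5 = 25 * √5 := by linear_combination √5 * (√5 ^ 2 + 5) * h2
  have h6 : √5 ^ 6 = 125 := by linear_combination (√5 ^ 4 + 5 * √5 ^ 2 + 25) * h2
  have := Real.sum_le_exp_of_nonneg (sqrt_nonneg 5) 7
  norm_num [Finset.sum_range_succ, Nat.factorial, h3, h4, h5, h6] at this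
  linarith [sqrt_nonneg 5]

lemma four_thirds_lt_expSubInvDivSq_largeRoot_five : 4 / 3 < expSubInvDivSq (largeRoot 5) := by
  have hsq : largeRoot 5 ^ 2 = (14 + 6 * √5) / 4 := by
    rw [largeRoot]
    norm_num
    linear_combination Real.sq_sqrt (show (0 : ℝ) ≤ 5 by norm_num) / 4
  rw [expSubInvDivSq, largeRoot_sub_inv (by norm_num), hsq, lt_div_iff₀ (by positivity)]
  norm_num
  linarith [fourteen_add_six_mul_sqrt_five_div_three_lt_exp]

/-- The auxiliary function `h(z) = (s(z)/s̃(z)) e^{√(z(z-4))} - 4/3` on `[4,∞)`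
is increasing, negative at `4` (where it equals `1 - 4/3`), positive for
`z ≥ 5`, and hence has a unique zero in `(4,5)`. -/
theorem aux_function_h_zero
    (s st h : ℝ → ℝ)
    (hsdef : ∀ z, s z = ((z - 2) - Real.sqrt (z * (z - 4))) / 2)
    (hstdef : ∀ z, st z = ((z - 2) + Real.sqrt (z * (z - 4))) / 2)
    (hdef : ∀ z, h z = (s z / st z) * Real.exp (Real.sqrt (z * (z - 4))) - 4/3) :
    StrictMonoOn h (Ici 4) ∧
    h 4 = 1 - 4/3 ∧ h 4 < 0 ∧
    (∀ z : ℝ, 5 ≤ z → 0 < h z) ∧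
    (∃! z₀ : ℝ, z₀ ∈ Ioo (4:ℝ) 5 ∧ h z₀ = 0) := by
  obtain rfl : s = smallRoot := funext hsdef
  obtain rfl : st = largeRoot := funext hstdef
  have hEq : EqOn (fun z => expSubInvDivSq (largeRoot z) - 4 / 3) h (Ici 4) := fun z hz => by
    rw [hdef, smallRoot_div_largeRoot_mul_exp hz]
  have hmono : StrictMonoOn h (Ici 4) := fun a ha b hb hab => by
    rw [← hEq ha, ← hEq hb]
    exact sub_lt_sub_right (strictMonoOn_expSubInvDivSq (one_le_largeRoot ha)
      (one_le_largeRoot hb) (strictMonoOn_largeRoot ha hb hab)) _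
  have h4 : h 4 = 1 - 4 / 3 := by rw [hdef]; norm_num [smallRoot, largeRoot]
  have h5 : 0 < h 5 := by
    rw [← hEq (by norm_num : (5 : ℝ) ∈ Ici 4), sub_pos]
    exact four_thirds_lt_expSubInvDivSq_largeRoot_five
  have hcont : ContinuousOn h (Icc 4 5) :=
    (((continuousOn_expSubInvDivSq.comp continuous_largeRoot.continuousOn
      fun _ hz => one_le_largeRoot hz).sub continuousOn_const).congr hEq.symm).mono
      Icc_subset_Ici_self
  have h4_neg : h 4 < 0 := h4 ▸ by norm_num
  have hpos : ∀ z : ℝ, 5 ≤ z → 0 < h z := fun z hz =>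
    h5.trans_le <| hmono.monotoneOn (by norm_num) (show (4 : ℝ) ≤ z by linarith) hz
  obtain ⟨z₀, hz₀, hz₀_zero⟩ :=
    intermediate_value_Ioo (by norm_num) hcont ⟨h4_neg, h5⟩
  refine ⟨hmono, h4, h4_neg, hpos, z₀, ⟨hz₀, hz₀_zero⟩, fun y hy => ?_⟩
  exact hmono.injOn hy.1.1.le hz₀.1.le (hy.2.trans hz₀_zero.symm)
end
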